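/- arXiv:1306.0649 — 2 statements merged into one kernel-verified Lean document; each statement's English description precedes it below -/
import Mathlib

section
/- Conversely, if f : F_p^n → C satisfies ‖f‖_∞ ≤ 1 and ‖f‖_{U^{d+1}} = 1, then f = e^{2πiP} for some non-classical polynomial P : F_p^n → T of degree ≤ d. -/
open Finset Complex AddCircle

/-!
The Gowers average of order `d + 1` averages, over all parallelepipeds, products of `2 ^ (d + 1)`
values of `f` and their conjugates, each of modulus at most one. Average of modulus one forces, by
strict convexity of `ℂ`, all these products to equal one unit. On degenerate parallelepipeds the
product has modulus `‖f x‖ ^ 2 ^ (d + 1)`, so `|f| = 1` and `f = e(P)`. The product over a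
parallelepiped is then `e` of the alternating sum of `P` over its vertices, which vanishes on
degenerate parallelepipeds and hence everywhere.
-/

/-- `P : V → ℝ/ℤ` is a non-classical polynomial of degree ≤ d: all `(d+1)`-fold additive
derivatives vanish. -/
def IsPolyDegLE {V : Type*} [AddCommGroup V] (P : V → AddCircle (1 : ℝ)) (d : ℕ) : Prop :=
  ∀ (y : Fin (d + 1) → V) (x : V),
    ∑ I : Finset (Fin (d + 1)),
      ((-1 : ℤ) ^ (d + 1 - I.card)) • P (x + ∑ i ∈ I, y i) = 0

/-- The complex Gowers average of order `d`. -/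
noncomputable def cGowersAvg {V : Type*} [AddCommGroup V] [Fintype V]
    (f : V → ℂ) (d : ℕ) : ℂ :=
  (∑ x : V, ∑ y : Fin d → V, ∏ I : Finset (Fin d),
      (if Even I.card then f (x + ∑ i ∈ I, y i)
       else (starRingEnd ℂ) (f (x + ∑ i ∈ I, y i)))) /
    ((Fintype.card V : ℂ) ^ (d + 1))

/-- Gowers norm of order `d`. -/
noncomputable def cGowersNorm {V : Type*} [AddCommGroup V] [Fintype V]
    (f : V → ℂ) (d : ℕ) : ℝ :=
  ‖cGowersAvg f d‖ ^ ((1 : ℝ) / 2 ^ d)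

theorem AddCircle.surjective_toCircle {T : ℝ} (hT : T ≠ 0) :
    Function.Surjective (toCircle : AddCircle T → Circle) := by
  intro z
  obtain ⟨θ, hθ⟩ := (homeomorphCircle hT).surjective z
  exact ⟨θ, by rwa [← homeomorphCircle_apply hT]⟩

theorem AddCircle.toCircle_sum {T : ℝ} {ι : Type*} (s : Finset ι) (θ : ι → AddCircle T) :
    toCircle (∑ i ∈ s, θ i) = ∏ i ∈ s, toCircle (θ i) := by
  induction s using Finset.cons_induction with
  | empty => simp
  | cons a s ha ih => rw [sum_cons, prod_cons, toCircle_add, ih]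

theorem neg_one_pow_sub_of_le {R : Type*} [CommRing R] {k m : ℕ} (h : k ≤ m) :
    (-1 : R) ^ (m - k) = (-1) ^ m * (-1) ^ k := by
  obtain ⟨j, rfl⟩ := Nat.exists_eq_add_of_le h
  rw [Nat.add_sub_cancel_left, pow_add, mul_right_comm, ← pow_add, ← two_mul, pow_mul,
    neg_one_sq, one_pow, one_mul]

theorem eq_of_norm_sum_eq_card {E ι : Type*} [NormedAddCommGroup E] [NormedSpace ℝ E]
    [StrictConvexSpace ℝ E] [Fintype ι] {z : ι → E} (hz : ∀ i, ‖z i‖ ≤ 1)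
    (h : ‖∑ i, z i‖ = Fintype.card ι) (i j : ι) : z i = z j := by
  by_contra hij
  have hcard : (0 : ℝ) < Fintype.card ι := by exact_mod_cast Fintype.card_pos_iff.2 ⟨i⟩
  have hlt := norm_sum_lt_of_strictConvexSpace (t := univ)
    (w := fun _ => (Fintype.card ι : ℝ)⁻¹) (fun _ _ => by positivity) (by simp [hcard.ne'])
    (mem_univ i) (mem_univ j) hij
    (by positivity) (by positivity) (fun k _ => hz k)
  rw [← smul_sum, norm_smul, h, norm_inv, Real.norm_natCast, inv_mul_cancel₀ hcard.ne'] at hlt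
  exact lt_irrefl _ hlt

theorem norm_eq_one_of_norm_sum_eq_card {E ι : Type*} [NormedAddCommGroup E] [NormedSpace ℝ E]
    [StrictConvexSpace ℝ E] [Fintype ι] {z : ι → E} (hz : ∀ i, ‖z i‖ ≤ 1)
    (h : ‖∑ i, z i‖ = Fintype.card ι) (i : ι) : ‖z i‖ = 1 := by
  have : Nonempty ι := ⟨i⟩
  have hcard : (Fintype.card ι : ℝ) ≠ 0 := by exact_mod_cast Fintype.card_ne_zero
  rwa [Fintype.sum_congr _ _ (fun j => eq_of_norm_sum_eq_card hz h j i), sum_const, card_univ,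
    ← Nat.cast_smul_eq_nsmul ℝ, norm_smul, Real.norm_natCast, mul_eq_left₀ hcard] at h

section Gowers

variable {V : Type*} [AddCommGroup V]

theorem isPolyDegLE_iff_sum_neg_one_pow_card_smul {P : V → AddCircle (1 : ℝ)} {d : ℕ} :
    IsPolyDegLE P d ↔ ∀ (y : Fin (d + 1) → V) (x : V),
      ∑ I : Finset (Fin (d + 1)), ((-1 : ℤ) ^ #I) • P (x + ∑ i ∈ I, y i) = 0 := by
  have hsign : ∀ (y : Fin (d + 1) → V) (x : V),
      ∑ I : Finset (Fin (d + 1)), ((-1 : ℤ) ^ (d + 1 - #I)) • P (x + ∑ i ∈ I, y i) =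
        ((-1 : ℤ) ^ (d + 1)) •
          ∑ I : Finset (Fin (d + 1)), ((-1 : ℤ) ^ #I) • P (x + ∑ i ∈ I, y i) := by
    intro y x
    rw [smul_sum]
    refine sum_congr rfl fun I _ => ?_
    rw [neg_one_pow_sub_of_le (by simpa using card_le_univ I), mul_smul]
  have hunit : ∀ s : AddCircle (1 : ℝ), ((-1 : ℤ) ^ (d + 1)) • s = 0 ↔ s = 0 := by
    intro s
    rcases neg_one_pow_eq_or ℤ (d + 1) with h | h <;> simp [h]
  simp only [IsPolyDegLE, hsign, hunit]

noncomputable def gowersTerm (f : V → ℂ) {k : ℕ} (x : V) (y : Fin k → V) : ℂ :=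
  ∏ I : Finset (Fin k),
    if Even #I then f (x + ∑ i ∈ I, y i) else (starRingEnd ℂ) (f (x + ∑ i ∈ I, y i))

theorem cGowersAvg_eq_sum_gowersTerm [Fintype V] (f : V → ℂ) (k : ℕ) :
    cGowersAvg f k =
      (∑ z : V × (Fin k → V), gowersTerm f z.1 z.2) / Fintype.card (V × (Fin k → V)) := by
  rw [cGowersAvg, Fintype.sum_prod_type, Fintype.card_prod, Fintype.card_fun, Fintype.card_fin,
    Nat.cast_mul, Nat.cast_pow, ← pow_succ']
  rfl

theorem norm_gowersTerm (f : V → ℂ) {k : ℕ} (x : V) (y : Fin k → V) :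
    ‖gowersTerm f x y‖ = ∏ I : Finset (Fin k), ‖f (x + ∑ i ∈ I, y i)‖ := by
  simp only [gowersTerm, norm_prod, apply_ite norm, Complex.norm_conj, ite_self]

theorem gowersTerm_toCircle (P : V → AddCircle (1 : ℝ)) {k : ℕ} (x : V) (y : Fin k → V) :
    gowersTerm (fun v => (toCircle (P v) : ℂ)) x y =
      toCircle (∑ I : Finset (Fin k), ((-1 : ℤ) ^ #I) • P (x + ∑ i ∈ I, y i)) := by
  rw [toCircle_sum]
  refine .trans (prod_congr rfl fun I _ => ?_) (map_prod Circle.coeHom _ _).symm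
  rcases Nat.even_or_odd #I with hI | hI
  · rw [if_pos hI, hI.neg_one_pow, one_smul]
    rfl
  · rw [if_neg (Nat.not_even_iff_odd.2 hI), hI.neg_one_pow, neg_one_smul, toCircle_neg]
    exact (Circle.coe_inv_eq_conj _).symm

theorem norm_cGowersAvg_eq_one [Fintype V] {f : V → ℂ} {k : ℕ} (hU : cGowersNorm f k = 1) :
    ‖cGowersAvg f k‖ = 1 :=
  (Real.rpow_left_inj (norm_nonneg _) zero_le_one (by positivity)).1
    (hU.trans (Real.one_rpow _).symm)

theorem exists_isPolyDegLE_of_cGowersNorm_eq_one [Fintype V] (d : ℕ) (f : V → ℂ)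
    (hf : ∀ x, ‖f x‖ ≤ 1) (hU : cGowersNorm f (d + 1) = 1) :
    ∃ P : V → AddCircle (1 : ℝ), IsPolyDegLE P d ∧
      ∀ x, f x = ((toCircle (P x) : Circle) : ℂ) := by
  have hterm_le (z : V × (Fin (d + 1) → V)) : ‖gowersTerm f z.1 z.2‖ ≤ 1 := by
    rw [norm_gowersTerm]
    exact prod_le_one (fun _ _ => norm_nonneg _) fun _ _ => hf _
  have hsum : ‖∑ z : V × (Fin (d + 1) → V), gowersTerm f z.1 z.2‖ =
      Fintype.card (V × (Fin (d + 1) → V)) := by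
    have h := norm_cGowersAvg_eq_one hU
    rwa [cGowersAvg_eq_sum_gowersTerm, norm_div, Complex.norm_natCast,
      div_eq_one_iff_eq (by positivity)] at h
  have hf_norm (x : V) : ‖f x‖ = 1 := by
    have h := norm_eq_one_of_norm_sum_eq_card hterm_le hsum (x, 0)
    simp only [norm_gowersTerm, Pi.zero_apply, sum_const_zero, add_zero, prod_const] at h
    exact (pow_eq_one_iff_of_nonneg (norm_nonneg _) (by simp)).1 h
  choose P hP using fun x =>
    surjective_toCircle one_ne_zero ⟨f x, mem_sphere_zero_iff_norm.2 (hf_norm x)⟩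
  have hfP : f = fun x => ((toCircle (P x) : Circle) : ℂ) := funext fun x => by rw [hP x]
  refine ⟨P, isPolyDegLE_iff_sum_neg_one_pow_card_smul.2 fun y x => ?_, fun x => by rw [hP x]⟩
  have hdiag : ∑ I : Finset (Fin (d + 1)),
      ((-1 : ℤ) ^ #I) • P (0 + ∑ i ∈ I, (0 : Fin (d + 1) → V) i) = 0 := by
    simp only [Pi.zero_apply, sum_const_zero, add_zero, ← sum_smul, ← powerset_univ,
      sum_powerset_neg_one_pow_card_of_nonempty univ_nonempty, zero_smul]
  have h := eq_of_norm_sum_eq_card hterm_le hsum (x, y) (0, 0)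
  rw [hfP, gowersTerm_toCircle, gowersTerm_toCircle, hdiag] at h
  exact injective_toCircle one_ne_zero (Circle.coe_injective h)

end Gowers

/-- If `f : F_p^n → ℂ` satisfies `‖f‖_∞ ≤ 1` and `‖f‖_{U^{d+1}} = 1`,
then `f = e^{2πiP}` for a non-classical polynomial `P` of degree ≤ d. -/
theorem exp_poly_of_gowersNorm_eq_one {p n : ℕ} [Fact p.Prime] (d : ℕ)
    (f : (Fin n → ZMod p) → ℂ) (hf : ∀ x, ‖f x‖ ≤ 1)
    (hU : cGowersNorm f (d + 1) = 1) :
    ∃ P : (Fin n → ZMod p) → AddCircle (1 : ℝ), IsPolyDegLE P d ∧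
      ∀ x, f x = ((AddCircle.toCircle (P x) : Circle) : ℂ) :=
  exists_isPolyDegLE_of_cGowersNorm_eq_one d f hf hU
end

section
/- Let f, g : F_p^n → {0,1} with ‖f−g‖_1 = α, and let A : F_p^m → F_p^n be a uniformly random injective affine map (affine embedding), with m ≤ n. Then E_A[‖Af − Ag‖_1] = α and E_A[‖Af − Ag‖_1^2] ≤ α^2 + p^{−m}, where Af = f∘A. Consequently Var_A(‖Af−Ag‖_1) ≤ p^{−m}, and by Chebyshev, Pr_A[‖Af−Ag‖_1 ≥ α + ε/2] ≤ 4/(p^m ε^2) for any ε > 0. -/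
/-!
Post-composition with affine automorphisms of `F_p^n` permutes the affine embeddings
`F_p^m → F_p^n`, and these automorphisms act transitively on points and on ordered pairs of
distinct points. So for fixed `x` the point `A x` is uniform, and for `x ≠ y` the pair
`(A x, A y)` is uniform among pairs of distinct points. With `h = |f - g|`, the first fact gives
`E_A ‖Af - Ag‖₁ = α`. Expanding the square, the off-diagonal terms satisfy
`E_A h(A x) h(A y) ≤ α²` by Cauchy–Schwarz, and the `p^m` diagonal terms are at most `1` since
`h ≤ 1`, whence `E_A ‖Af - Ag‖₁² ≤ α² + p^{-m}`. Variance and Chebyshev bounds follow.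
-/

open Finset

/-- An affine embedding `F_p^m → F_p^n`: an injective map of the form `x ↦ Lx + c`
with `L` linear (necessarily injective) and `c` constant. -/
def IsAffineEmbedding {p m n : ℕ} (A : (Fin m → ZMod p) → (Fin n → ZMod p)) : Prop :=
  Function.Injective A ∧
    ∃ (L : (Fin m → ZMod p) →ₗ[ZMod p] (Fin n → ZMod p)) (c : Fin n → ZMod p),
      ∀ x, A x = L x + c

noncomputable instance {p m n : ℕ} [Fact p.Prime] :
    Fintype {A : (Fin m → ZMod p) → (Fin n → ZMod p) // IsAffineEmbedding A} :=
  Fintype.ofFinite _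

/-- `L¹` average. -/
noncomputable def l1Avg {X : Type*} [Fintype X] (f : X → ℝ) : ℝ :=
  (∑ x : X, |f x|) / (Fintype.card X : ℝ)

section FiberCounting

variable {E T : Type*} [Fintype E] [DecidableEq T]

theorem card_filter_apply_eq_le_of_injective (F : E → T) {σ : E → E} (hσ : σ.Injective)
    {s t : T} (hst : ∀ A, F A = s → F (σ A) = t) : #{A | F A = s} ≤ #{A | F A = t} :=
  card_le_card_of_injOn σ (fun A hA => by simp_all) hσ.injOn

/-- If the fibres of `F` over `S` are equinumerous, `F` pushes the uniform distribution on `E`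
forward to the uniform distribution on `S`. -/
theorem sum_comp_mul_card_eq_of_card_fiber_le (F : E → T) (S : Finset T) (hF : ∀ A, F A ∈ S)
    (hfib : ∀ s ∈ S, ∀ t ∈ S, #{A | F A = s} ≤ #{A | F A = t}) (u : T → ℝ) :
    (∑ A, u (F A)) * #S = Fintype.card E * ∑ t ∈ S, u t := by
  have hsum : ∑ A, u (F A) = ∑ t ∈ S, (#{A | F A = t} : ℝ) * u t := by
    rw [← sum_fiberwise_of_maps_to (fun A _ => hF A)]
    refine sum_congr rfl fun t _ => ?_
    rw [sum_congr rfl fun A hA => congrArg u (mem_filter.1 hA).2, sum_const, nsmul_eq_mul]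
  have hcard : Fintype.card E = ∑ s ∈ S, #{A | F A = s} := by
    rw [← card_univ]; exact card_eq_sum_card_fiberwise fun A _ => hF A
  calc (∑ A, u (F A)) * #S = ∑ _s ∈ S, ∑ t ∈ S, (#{A | F A = t} : ℝ) * u t := by
        rw [hsum, sum_const, nsmul_eq_mul, mul_comm]
    _ = ∑ s ∈ S, ∑ t ∈ S, (#{A | F A = s} : ℝ) * u t :=
        sum_congr rfl fun s hs => sum_congr rfl fun t ht => by
          rw [(hfib s hs t ht).antisymm (hfib t ht s hs)]
    _ = Fintype.card E * ∑ t ∈ S, u t := by rw [hcard, Nat.cast_sum, sum_mul_sum]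

end FiberCounting

theorem sum_offDiag_mul_le {ι : Type*} [DecidableEq ι] (s : Finset ι) (h : ι → ℝ) :
    ∑ q ∈ s.offDiag, h q.1 * h q.2 ≤ #s.offDiag * (∑ i ∈ s, h i / #s) ^ 2 := by
  have hsplit : ∑ q ∈ s.offDiag, h q.1 * h q.2 = (∑ i ∈ s, h i) ^ 2 - ∑ i ∈ s, h i ^ 2 := by
    rw [sq, sum_mul_sum, ← sum_product', ← diag_union_offDiag, sum_union (disjoint_diag_offDiag s),
      sum_diag]
    simp only [sq, add_sub_cancel_left]
  have hcard : (#s.offDiag : ℝ) = #s * (#s - 1) := by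
    rw [offDiag_card, Nat.cast_sub (Nat.le_mul_self _)]; push_cast; ring
  rcases s.eq_empty_or_nonempty with rfl | hne
  · simp
  have hs' : (0 : ℝ) < #s := by exact_mod_cast hne.card_pos
  have hcs : (∑ i ∈ s, h i) ^ 2 / #s ≤ ∑ i ∈ s, h i ^ 2 := by
    rw [div_le_iff₀ hs', mul_comm]; exact sq_sum_le_card_mul_sum_sq
  calc ∑ q ∈ s.offDiag, h q.1 * h q.2 ≤ (∑ i ∈ s, h i) ^ 2 - (∑ i ∈ s, h i) ^ 2 / #s := by
        rw [hsplit]; linarith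
    _ = #s.offDiag * (∑ i ∈ s, h i / #s) ^ 2 := by
        rw [hcard, ← sum_div]; field_simp

section FiniteStatistics

variable {ι : Type*} [Fintype ι]

theorem sum_sub_sq_le_of_sum_sq_le (X : ι → ℝ) {a δ : ℝ}
    (hmean : ∑ i, X i = Fintype.card ι * a) (hsq : ∑ i, X i ^ 2 ≤ Fintype.card ι * (a ^ 2 + δ)) :
    ∑ i, (X i - a) ^ 2 ≤ Fintype.card ι * δ := by
  have : ∑ i, (X i - a) ^ 2 = ∑ i, X i ^ 2 - 2 * a * ∑ i, X i + Fintype.card ι * a ^ 2 := by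
    rw [sum_congr rfl fun i _ => (by ring : (X i - a) ^ 2 = X i ^ 2 - 2 * a * X i + a ^ 2),
      sum_add_distrib, sum_sub_distrib, ← mul_sum, sum_const, card_univ, nsmul_eq_mul]
  rw [this, hmean]
  linarith

theorem card_filter_le_mul_sq_le_sum_sub_sq (X : ι → ℝ) (a : ℝ) {t : ℝ} (ht : 0 ≤ t) :
    #{i | a + t ≤ X i} * t ^ 2 ≤ ∑ i, (X i - a) ^ 2 := by
  calc #{i | a + t ≤ X i} * t ^ 2 = ∑ _i ∈ {i | a + t ≤ X i}, t ^ 2 := by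
        rw [sum_const, nsmul_eq_mul]
    _ ≤ ∑ i ∈ {i | a + t ≤ X i}, (X i - a) ^ 2 :=
        sum_le_sum fun i hi => pow_le_pow_left₀ ht (by linarith [(mem_filter.1 hi).2]) 2
    _ ≤ ∑ i, (X i - a) ^ 2 :=
        sum_le_sum_of_subset_of_nonneg (subset_univ _) fun _ _ _ => sq_nonneg _

end FiniteStatistics

theorem exists_linearEquiv_apply_eq {K V : Type*} [Field K] [AddCommGroup V] [Module K V]
    {a b : V} (ha : a ≠ 0) (hb : b ≠ 0) : ∃ Φ : V ≃ₗ[K] V, Φ a = b := by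
  obtain ⟨Φ, hΦ⟩ := Submodule.exists_linearEquiv_restrict_eq
    ((LinearEquiv.toSpanNonzeroSingleton K V a ha).symm.trans
      (LinearEquiv.toSpanNonzeroSingleton K V b hb))
  refine ⟨Φ, ?_⟩
  have := hΦ (LinearEquiv.toSpanNonzeroSingleton K V a ha 1)
  rw [LinearEquiv.trans_apply, LinearEquiv.symm_apply_apply,
    LinearEquiv.toSpanNonzeroSingleton_one, LinearEquiv.toSpanNonzeroSingleton_one] at this
  exact this.symm

abbrev AffEmb (p m n : ℕ) := {A : (Fin m → ZMod p) → (Fin n → ZMod p) // IsAffineEmbedding A}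

namespace AffEmb

section

variable {p m n : ℕ}

def postcomp (Φ : (Fin n → ZMod p) ≃ₗ[ZMod p] (Fin n → ZMod p)) (d : Fin n → ZMod p)
    (A : AffEmb p m n) : AffEmb p m n :=
  ⟨fun z => Φ (A.1 z) + d, fun _ _ hab => A.2.1 (Φ.injective (add_right_cancel hab)),
    let ⟨L, c, hL⟩ := A.2.2
    ⟨Φ.toLinearMap ∘ₗ L, Φ c + d, fun z => by simp [hL z, add_assoc]⟩⟩

theorem postcomp_apply (Φ : (Fin n → ZMod p) ≃ₗ[ZMod p] (Fin n → ZMod p)) (d : Fin n → ZMod p)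
    (A : AffEmb p m n) (z : Fin m → ZMod p) : (postcomp Φ d A).1 z = Φ (A.1 z) + d :=
  rfl

theorem postcomp_injective (Φ : (Fin n → ZMod p) ≃ₗ[ZMod p] (Fin n → ZMod p))
    (d : Fin n → ZMod p) : (postcomp Φ d : AffEmb p m n → AffEmb p m n).Injective :=
  fun _ _ hAB => Subtype.ext <| funext fun z =>
    Φ.injective <| add_right_cancel (congrFun (congrArg Subtype.val hAB) z)

theorem nonempty (hmn : m ≤ n) : Nonempty (AffEmb p m n) := by
  let L := Function.ExtendByZero.linearMap (ZMod p) (Fin.castLE hmn)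
  have hL : Function.Injective L := fun x y hxy => funext fun i => by
    simpa [L, (Fin.castLE_injective hmn).extend_apply] using congrFun hxy (Fin.castLE hmn i)
  exact ⟨⟨L, hL, L, 0, fun x => (add_zero _).symm⟩⟩

end

variable {p m n : ℕ} [Fact p.Prime]

theorem card_filter_apply_eq_le (x : Fin m → ZMod p) (v w : Fin n → ZMod p) :
    #{A : AffEmb p m n | A.1 x = v} ≤ #{A : AffEmb p m n | A.1 x = w} :=
  card_filter_apply_eq_le_of_injective _ (postcomp_injective (LinearEquiv.refl _ _) (w - v))
    fun A hA => by simp [postcomp_apply, hA]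

theorem card_filter_apply_pair_eq_le (x y : Fin m → ZMod p) {v v' w w' : Fin n → ZMod p}
    (hv : v ≠ v') (hw : w ≠ w') :
    #{A : AffEmb p m n | (A.1 x, A.1 y) = (v, v')} ≤
      #{A : AffEmb p m n | (A.1 x, A.1 y) = (w, w')} := by
  obtain ⟨Φ, hΦ⟩ := exists_linearEquiv_apply_eq (K := ZMod p)
    (sub_ne_zero.2 hv.symm) (sub_ne_zero.2 hw.symm)
  have hΦv' : Φ v' = Φ v + (w' - w) := by rw [← hΦ, map_sub]; abel
  refine card_filter_apply_eq_le_of_injective _ (postcomp_injective Φ (w - Φ v)) fun A hA => ?_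
  simp only [Prod.mk.injEq, postcomp_apply] at hA ⊢
  rw [hA.1, hA.2, hΦv']
  constructor <;> abel

theorem sum_apply_mul_card (x : Fin m → ZMod p) (u : (Fin n → ZMod p) → ℝ) :
    (∑ A : AffEmb p m n, u (A.1 x)) * Fintype.card (Fin n → ZMod p) =
      Fintype.card (AffEmb p m n) * ∑ v, u v :=
  sum_comp_mul_card_eq_of_card_fiber_le (fun A : AffEmb p m n => A.1 x) univ
    (fun _ => mem_univ _) (fun v _ w _ => card_filter_apply_eq_le x v w) u

theorem sum_apply_pair_mul_card {x y : Fin m → ZMod p} (hxy : x ≠ y)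
    (u : (Fin n → ZMod p) × (Fin n → ZMod p) → ℝ) :
    (∑ A : AffEmb p m n, u (A.1 x, A.1 y)) * #(univ : Finset (Fin n → ZMod p)).offDiag =
      Fintype.card (AffEmb p m n) * ∑ q ∈ univ.offDiag, u q := by
  refine sum_comp_mul_card_eq_of_card_fiber_le (fun A : AffEmb p m n => (A.1 x, A.1 y)) _
    (fun A => mem_offDiag.2 ⟨mem_univ _, mem_univ _, A.2.1.ne hxy⟩) ?_ u
  rintro ⟨v, v'⟩ hv ⟨w, w'⟩ hw
  exact card_filter_apply_pair_eq_le x y (mem_offDiag.1 hv).2.2 (mem_offDiag.1 hw).2.2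

theorem sum_apply_mul_apply_le {x y : Fin m → ZMod p} (hxy : x ≠ y)
    (h : (Fin n → ZMod p) → ℝ) :
    ∑ A : AffEmb p m n, h (A.1 x) * h (A.1 y) ≤
      Fintype.card (AffEmb p m n) * (∑ v, h v / Fintype.card (Fin n → ZMod p)) ^ 2 := by
  set S := (univ : Finset (Fin n → ZMod p)).offDiag
  rcases isEmpty_or_nonempty (AffEmb p m n) with _ | hne
  · simp
  obtain ⟨A⟩ := hne
  have hS : (0 : ℝ) < #S := by
    exact_mod_cast card_pos.2 ⟨(A.1 x, A.1 y), mem_offDiag.2 ⟨mem_univ _, mem_univ _, A.2.1.ne hxy⟩⟩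
  have hoff := sum_offDiag_mul_le univ h
  rw [card_univ] at hoff
  refine le_of_mul_le_mul_right ?_ hS
  calc (∑ A : AffEmb p m n, h (A.1 x) * h (A.1 y)) * #S
      = Fintype.card (AffEmb p m n) * ∑ q ∈ S, h q.1 * h q.2 :=
        sum_apply_pair_mul_card hxy fun q => h q.1 * h q.2
    _ ≤ Fintype.card (AffEmb p m n) * (#S * (∑ v, h v / Fintype.card (Fin n → ZMod p)) ^ 2) :=
        mul_le_mul_of_nonneg_left hoff (by positivity)
    _ = _ := by ring

theorem sum_l1Avg_comp (u : (Fin n → ZMod p) → ℝ) :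
    ∑ A : AffEmb p m n, l1Avg (fun x => u (A.1 x)) = Fintype.card (AffEmb p m n) * l1Avg u := by
  have hN : (0 : ℝ) < Fintype.card (Fin n → ZMod p) := by exact_mod_cast Fintype.card_pos
  have hpoint : ∀ x, ∑ A : AffEmb p m n, |u (A.1 x)| = Fintype.card (AffEmb p m n) * l1Avg u := by
    intro x
    rw [l1Avg, mul_div_assoc', eq_div_iff hN.ne']
    exact sum_apply_mul_card x fun v => |u v|
  calc ∑ A : AffEmb p m n, l1Avg (fun x => u (A.1 x))
      = (∑ x, ∑ A : AffEmb p m n, |u (A.1 x)|) / Fintype.card (Fin m → ZMod p) := by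
        simp only [l1Avg]; rw [← sum_div, sum_comm]
    _ = Fintype.card (AffEmb p m n) * l1Avg u := by
        rw [sum_congr rfl fun x _ => hpoint x, sum_const, card_univ, nsmul_eq_mul]
        field_simp

theorem sum_l1Avg_comp_sq_le (u : (Fin n → ZMod p) → ℝ) (hu : ∀ v, |u v| ≤ 1) :
    ∑ A : AffEmb p m n, l1Avg (fun x => u (A.1 x)) ^ 2 ≤
      Fintype.card (AffEmb p m n) * (l1Avg u ^ 2 + (Fintype.card (Fin m → ZMod p) : ℝ)⁻¹) := by
  set K : ℝ := (Fintype.card (AffEmb p m n) : ℝ)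
  set M : ℝ := (Fintype.card (Fin m → ZMod p) : ℝ)
  have hM : 0 < M := by simp only [M]; exact_mod_cast Fintype.card_pos
  have hpair : ∀ x y, ∑ A : AffEmb p m n, |u (A.1 x)| * |u (A.1 y)| ≤
      K * l1Avg u ^ 2 + if x = y then K else 0 := by
    intro x y
    by_cases hxy : x = y
    · subst hxy
      rw [if_pos rfl]
      calc ∑ A : AffEmb p m n, |u (A.1 x)| * |u (A.1 x)| ≤ ∑ _A : AffEmb p m n, (1 : ℝ) :=
            sum_le_sum fun A _ => mul_le_one₀ (hu _) (abs_nonneg _) (hu _)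
        _ = K := by simp [K]
        _ ≤ K * l1Avg u ^ 2 + K := le_add_of_nonneg_left (by positivity)
    · rw [if_neg hxy, add_zero, l1Avg, sum_div]
      exact sum_apply_mul_apply_le hxy fun v => |u v|
  have hsq : ∀ A : AffEmb p m n, l1Avg (fun x => u (A.1 x)) ^ 2 =
      (∑ x, ∑ y, |u (A.1 x)| * |u (A.1 y)|) / M ^ 2 := by
    intro A
    rw [l1Avg, div_pow, sq, sum_mul_sum]
  calc ∑ A : AffEmb p m n, l1Avg (fun x => u (A.1 x)) ^ 2
      = (∑ x, ∑ y, ∑ A : AffEmb p m n, |u (A.1 x)| * |u (A.1 y)|) / M ^ 2 := by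
        simp_rw [hsq, ← sum_div]
        rw [sum_comm]
        simp_rw [sum_comm (γ := AffEmb p m n)]
    _ ≤ (∑ x : Fin m → ZMod p, ∑ y : Fin m → ZMod p,
          (K * l1Avg u ^ 2 + if x = y then K else 0)) / M ^ 2 := by
        gcongr with x _ y _
        exact hpair x y
    _ = K * (l1Avg u ^ 2 + M⁻¹) := by
        simp only [sum_add_distrib, sum_ite_eq, sum_const, card_univ, nsmul_eq_mul, mem_univ,
          if_true]
        field_simp
        ring

end AffEmb

open scoped Classical in
/-- Let `f, g : F_p^n → {0,1}` with `‖f−g‖₁ = α`, and let `A` be a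
uniformly random affine embedding `F_p^m → F_p^n`, `m ≤ n`. Then
`E_A ‖Af−Ag‖₁ = α`, `E_A ‖Af−Ag‖₁² ≤ α² + p^{−m}`, so `Var_A ‖Af−Ag‖₁ ≤ p^{−m}`, and
`Pr_A[‖Af−Ag‖₁ ≥ α + ε/2] ≤ 4/(p^m ε²)`. -/
theorem random_restriction_distance {p m n : ℕ} [Fact p.Prime] (hmn : m ≤ n)
    (f g : (Fin n → ZMod p) → ℝ)
    (hf : ∀ x, f x ∈ ({0, 1} : Set ℝ)) (hg : ∀ x, g x ∈ ({0, 1} : Set ℝ))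
    (α : ℝ) (hα : l1Avg (fun x => f x - g x) = α) (ε : ℝ) (hε : 0 < ε) :
    (∑ A : {A : (Fin m → ZMod p) → (Fin n → ZMod p) // IsAffineEmbedding A},
          l1Avg (fun x => f (A.1 x) - g (A.1 x))) /
        (Fintype.card {A : (Fin m → ZMod p) → (Fin n → ZMod p) // IsAffineEmbedding A} : ℝ)
      = α ∧
    (∑ A : {A : (Fin m → ZMod p) → (Fin n → ZMod p) // IsAffineEmbedding A},
          (l1Avg (fun x => f (A.1 x) - g (A.1 x))) ^ 2) /
        (Fintype.card {A : (Fin m → ZMod p) → (Fin n → ZMod p) // IsAffineEmbedding A} : ℝ)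
      ≤ α ^ 2 + ((p : ℝ) ^ m)⁻¹ ∧
    (∑ A : {A : (Fin m → ZMod p) → (Fin n → ZMod p) // IsAffineEmbedding A},
          (l1Avg (fun x => f (A.1 x) - g (A.1 x)) - α) ^ 2) /
        (Fintype.card {A : (Fin m → ZMod p) → (Fin n → ZMod p) // IsAffineEmbedding A} : ℝ)
      ≤ ((p : ℝ) ^ m)⁻¹ ∧
    ((Finset.univ.filter
          (fun A : {A : (Fin m → ZMod p) → (Fin n → ZMod p) // IsAffineEmbedding A} =>
            α + ε / 2 ≤ l1Avg (fun x => f (A.1 x) - g (A.1 x)))).card : ℝ) /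
        (Fintype.card {A : (Fin m → ZMod p) → (Fin n → ZMod p) // IsAffineEmbedding A} : ℝ)
      ≤ 4 / ((p : ℝ) ^ m * ε ^ 2) := by
  have : Nonempty (AffEmb p m n) := AffEmb.nonempty hmn
  have hK : (0 : ℝ) < Fintype.card (AffEmb p m n) := by exact_mod_cast Fintype.card_pos
  have hM : (Fintype.card (Fin m → ZMod p) : ℝ) = (p : ℝ) ^ m := by simp
  have hpm : (0 : ℝ) < (p : ℝ) ^ m := hM ▸ by exact_mod_cast Fintype.card_pos
  have hdist : ∀ v, |f v - g v| ≤ 1 := by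
    intro v
    obtain hfv | hfv : f v = 0 ∨ f v = 1 := hf v <;>
    obtain hgv | hgv : g v = 0 ∨ g v = 1 := hg v <;> norm_num [hfv, hgv]
  have hmean := AffEmb.sum_l1Avg_comp (m := m) fun v => f v - g v
  have hsq := AffEmb.sum_l1Avg_comp_sq_le (m := m) _ hdist
  rw [hα] at hmean hsq
  rw [hM] at hsq
  have hvar := sum_sub_sq_le_of_sum_sq_le _ hmean hsq
  have hcheb := card_filter_le_mul_sq_le_sum_sub_sq
    (fun A : AffEmb p m n => l1Avg fun x => f (A.1 x) - g (A.1 x)) α (half_pos hε).le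
  refine ⟨?_, ?_, ?_, ?_⟩
  · rw [hmean]; field_simp
  · rw [div_le_iff₀ hK, mul_comm]; exact hsq
  · rw [div_le_iff₀ hK, mul_comm]; exact hvar
  · rw [div_le_div_iff₀ hK (by positivity)]
    calc _ = 4 * (p : ℝ) ^ m * (_ * (ε / 2) ^ 2) := by ring
      _ ≤ 4 * (p : ℝ) ^ m * (Fintype.card (AffEmb p m n) * ((p : ℝ) ^ m)⁻¹) :=
          mul_le_mul_of_nonneg_left (hcheb.trans hvar) (by positivity)
      _ = 4 * Fintype.card (AffEmb p m n) := by field_simp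
end
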